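/- arXiv:2105.11227 — 3 statements merged into one kernel-verified Lean document; each statement's English description precedes it below -/
import Mathlib

section
/- (Finite-time stability comparison lemma) Suppose V : [0,∞) → [0,∞) is differentiable, V satisfies V'(t) ≤ −β V(t)^p + k V(t) for all t with V(t) > 0, where 0 < p < 1, k > 0, β > k·V(0)^{1-p}. Then there exists t̄ ≤ ln(1 − (k/β) V(0)^{1-p}) / (k(p−1)) such that V(t) = 0 for all t ≥ t̄. -/
/-!
For `W = V ^ (1 - p)` the differential inequality becomes linear while `V > 0`:
`W' ≤ (1 - p) (k W - β) = λ (W - β / k)` with `λ = k (1 - p)`. The linear comparison principle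
then gives `W t - β / k ≤ (W 0 - β / k) e^{λ t}`, and the right-hand side reaches `-β / k`
at `t = t̄ = settlingTime p k β (V 0)`, so `V` must vanish somewhere in `[0, t̄]`.
Once zero, `V` stays zero, since `V' ≤ k V` makes `V e^{-k t}` nonincreasing.
-/

open Real Set

theorem antitoneOn_mul_exp_neg_of_deriv_le {f : ℝ → ℝ} {a b c : ℝ}
    (hcont : ContinuousOn f (Icc a b)) (hdiff : ∀ x ∈ Ioo a b, DifferentiableAt ℝ f x)
    (hle : ∀ x ∈ Ioo a b, deriv f x ≤ c * f x) :
    AntitoneOn (fun t => f t * exp (-(c * t))) (Icc a b) := by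
  have hexp : ∀ x, HasDerivAt (fun t => exp (-(c * t))) (exp (-(c * x)) * -c) x := fun x => by
    simpa using ((hasDerivAt_id x).const_mul c).neg.exp
  refine antitoneOn_of_deriv_nonpos (convex_Icc a b) (hcont.mul (by fun_prop)) ?_ ?_
  · rw [interior_Icc]
    intro x hx
    exact ((hdiff x hx).mul (hexp x).differentiableAt).differentiableWithinAt
  · rw [interior_Icc]
    intro x hx
    have hd : HasDerivAt (fun t => f t * exp (-(c * t)))
        (deriv f x * exp (-(c * x)) + f x * (exp (-(c * x)) * -c)) x :=
      (hdiff x hx).hasDerivAt.mul (hexp x)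
    rw [hd.deriv]
    nlinarith [hle x hx, exp_pos (-(c * x))]

theorem le_mul_exp_of_deriv_le {f : ℝ → ℝ} {a b c : ℝ}
    (hcont : ContinuousOn f (Icc a b)) (hdiff : ∀ x ∈ Ioo a b, DifferentiableAt ℝ f x)
    (hle : ∀ x ∈ Ioo a b, deriv f x ≤ c * f x) (hab : a ≤ b) :
    f b ≤ f a * exp (c * (b - a)) := by
  have hanti := antitoneOn_mul_exp_neg_of_deriv_le hcont hdiff hle
    (left_mem_Icc.2 hab) (right_mem_Icc.2 hab) hab
  calc f b = f b * exp (-(c * b)) * exp (c * b) := by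
        rw [mul_assoc, ← exp_add, neg_add_cancel, exp_zero, mul_one]
    _ ≤ f a * exp (-(c * a)) * exp (c * b) := by gcongr
    _ = f a * exp (c * (b - a)) := by rw [mul_assoc, ← exp_add]; ring_nf

theorem eq_zero_of_deriv_le_mul_of_eq_zero {V : ℝ → ℝ} {k t₀ t : ℝ} (hV : Differentiable ℝ V)
    (hnonneg : ∀ s, t₀ ≤ s → 0 ≤ V s) (hderiv : ∀ s, t₀ < s → 0 < V s → deriv V s ≤ k * V s)
    (hzero : V t₀ = 0) (ht : t₀ ≤ t) : V t = 0 := by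
  have hle : ∀ x ∈ Ioo t₀ t, deriv V x ≤ k * V x := by
    intro x hx
    rcases (hnonneg x hx.1.le).eq_or_lt with hVx | hVx
    · have hmin : IsLocalMin V x := by
        filter_upwards [eventually_gt_nhds hx.1] with y hy
        rw [← hVx]
        exact hnonneg y hy.le
      rw [hmin.deriv_eq_zero, ← hVx, mul_zero]
    · exact hderiv x hx.1 hVx
  have hbound := le_mul_exp_of_deriv_le hV.continuous.continuousOn (fun x _ => hV x) hle ht
  rw [hzero, zero_mul] at hbound
  exact hbound.antisymm (hnonneg t ht)

theorem deriv_rpow_one_sub_le {V : ℝ → ℝ} {p k β x : ℝ} (hp : p < 1)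
    (hV : DifferentiableAt ℝ V x) (hpos : 0 < V x)
    (hderiv : deriv V x ≤ -β * V x ^ p + k * V x) :
    deriv (fun t => V t ^ (1 - p)) x ≤ (1 - p) * (k * V x ^ (1 - p) - β) := by
  have hinv : V x ^ p * V x ^ (-p) = 1 := by rw [← rpow_add hpos]; simp
  have hsplit : V x * V x ^ (-p) = V x ^ (1 - p) := by
    rw [sub_eq_add_neg, rpow_add hpos, rpow_one]
  rw [(hV.hasDerivAt.rpow_const (Or.inl hpos.ne')).deriv, sub_sub_cancel_left]
  calc deriv V x * (1 - p) * V x ^ (-p)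
      ≤ (-β * V x ^ p + k * V x) * (1 - p) * V x ^ (-p) := by
        gcongr
    _ = (1 - p) * (k * V x ^ (1 - p) - β) := by linear_combination (1 - p) * (k * hsplit - β * hinv)

noncomputable def settlingTime (p k β V₀ : ℝ) : ℝ :=
  log (1 - k / β * V₀ ^ (1 - p)) / (k * (p - 1))

section settlingTime

variable {p k β V₀ : ℝ}

theorem settlingTime_nonneg (hp : p < 1) (hk : 0 < k) (hr₀ : 0 ≤ k / β * V₀ ^ (1 - p))
    (hr₁ : k / β * V₀ ^ (1 - p) < 1) : 0 ≤ settlingTime p k β V₀ :=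
  div_nonneg_of_nonpos (log_nonpos (by linarith) (by linarith)) (by nlinarith)

theorem exp_mul_settlingTime (hp : p < 1) (hk : 0 < k) (hr : k / β * V₀ ^ (1 - p) < 1) :
    exp (k * (1 - p) * settlingTime p k β V₀) = (1 - k / β * V₀ ^ (1 - p))⁻¹ := by
  have hkp : k * (p - 1) ≠ 0 := mul_ne_zero hk.ne' (by linarith)
  rw [settlingTime, mul_div_assoc', show k * (1 - p) = -(k * (p - 1)) by ring, neg_mul,
    neg_div, mul_div_cancel_left₀ _ hkp, exp_neg, exp_log (by linarith)]

end settlingTime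

theorem exists_eq_zero_mem_Icc_settlingTime {V : ℝ → ℝ} {p k β : ℝ} (hV : Differentiable ℝ V)
    (hnonneg : ∀ t, 0 ≤ t → 0 ≤ V t) (hp : p < 1) (hk : 0 < k) (hβ : k * V 0 ^ (1 - p) < β)
    (hderiv : ∀ t, 0 ≤ t → 0 < V t → deriv V t ≤ -β * V t ^ p + k * V t) :
    ∃ s ∈ Icc 0 (settlingTime p k β (V 0)), V s = 0 := by
  set T := settlingTime p k β (V 0)
  have hW₀ : 0 ≤ V 0 ^ (1 - p) := rpow_nonneg (hnonneg 0 le_rfl) _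
  have hβ₀ : 0 < β := (mul_nonneg hk.le hW₀).trans_lt hβ
  have hr₁ : k / β * V 0 ^ (1 - p) < 1 := by rwa [div_mul_eq_mul_div, div_lt_one hβ₀]
  have hT : 0 ≤ T := settlingTime_nonneg hp hk (by positivity) hr₁
  by_contra! hne
  have hpos : ∀ t ∈ Icc 0 T, 0 < V t := fun t ht => (hnonneg t ht.1).lt_of_ne' (hne t ht)
  set f : ℝ → ℝ := fun t => V t ^ (1 - p) - β / k with hf
  have hcont : ContinuousOn f (Icc 0 T) :=
    (hV.continuous.continuousOn.rpow_const fun x hx => Or.inl (hpos x hx).ne').sub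
      continuousOn_const
  have hdiff : ∀ x ∈ Ioo 0 T, DifferentiableAt ℝ f x :=
    fun x hx => ((hV x).rpow_const (Or.inl (hpos x (Ioo_subset_Icc_self hx)).ne')).sub_const _
  have hlin : ∀ x ∈ Ioo 0 T, deriv f x ≤ k * (1 - p) * f x := by
    intro x hx
    have hVx := hpos x (Ioo_subset_Icc_self hx)
    rw [hf, deriv_sub_const]
    convert deriv_rpow_one_sub_le hp (hV x) hVx (hderiv x hx.1.le hVx) using 1
    field_simp
  have hcomp := le_mul_exp_of_deriv_le hcont hdiff hlin hT
  rw [sub_zero, exp_mul_settlingTime hp hk hr₁] at hcomp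
  have hend : V T ^ (1 - p) ≤ 0 := by
    have h1r : 0 < 1 - k / β * V 0 ^ (1 - p) := by linarith
    have hval : (V 0 ^ (1 - p) - β / k) * (1 - k / β * V 0 ^ (1 - p))⁻¹ = -(β / k) := by
      rw [mul_inv_eq_iff_eq_mul₀ h1r.ne']
      field_simp
      ring
    linarith
  exact (rpow_pos_of_pos (hpos T (right_mem_Icc.2 hT)) _).not_ge hend

theorem finite_time_comparison_general (V : ℝ → ℝ) (hV : Differentiable ℝ V)
    (hVnonneg : ∀ t, 0 ≤ t → 0 ≤ V t)
    (p k β : ℝ) (hp1 : p < 1) (hk : 0 < k)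
    (hβ : k * (V 0) ^ (1 - p) < β)
    (hderiv : ∀ t, 0 ≤ t → 0 < V t → deriv V t ≤ -β * (V t) ^ p + k * V t) :
    ∃ tbar : ℝ,
      tbar ≤ Real.log (1 - (k / β) * (V 0) ^ (1 - p)) / (k * (p - 1)) ∧
      ∀ t, tbar ≤ t → V t = 0 := by
  obtain ⟨s, ⟨hs₀, hsT⟩, hVs⟩ := exists_eq_zero_mem_Icc_settlingTime hV hVnonneg hp1 hk hβ hderiv
  have hβ₀ : 0 < β := (mul_nonneg hk.le (rpow_nonneg (hVnonneg 0 le_rfl) _)).trans_lt hβ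
  refine ⟨s, hsT, fun t hst => eq_zero_of_deriv_le_mul_of_eq_zero (k := k) hV
    (fun t ht => hVnonneg t (hs₀.trans ht)) (fun t ht hVt => ?_) hVs hst⟩
  nlinarith [hderiv t (hs₀.trans ht.le) hVt, rpow_nonneg hVt.le p]

/-- Finite-time stability comparison lemma: if V' ≤ -β V^p + k V while V > 0,
with 0 < p < 1, k > 0, β > k V(0)^(1-p), then V vanishes after
time at most ln(1 - (k/β) V(0)^(1-p)) / (k (p - 1)). -/
theorem finite_time_comparison (V : ℝ → ℝ) (hV : Differentiable ℝ V)
    (hVnonneg : ∀ t, 0 ≤ t → 0 ≤ V t)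
    (p k β : ℝ) (hp0 : 0 < p) (hp1 : p < 1) (hk : 0 < k)
    (hβ : k * (V 0) ^ (1 - p) < β)
    (hderiv : ∀ t, 0 ≤ t → 0 < V t → deriv V t ≤ -β * (V t) ^ p + k * V t) :
    ∃ tbar : ℝ,
      tbar ≤ Real.log (1 - (k / β) * (V 0) ^ (1 - p)) / (k * (p - 1)) ∧
      ∀ t, tbar ≤ t → V t = 0 :=
  finite_time_comparison_general V hV hVnonneg p k β hp1 hk hβ hderiv
end

section
/- (Strict diagonal dominance of the pinned coupling matrix columns) Let A be an m×m real matrix with a_{ij} ≥ 0 for i ≠ j and a_{ii} = −∑_{j≠i} a_{ij}, with rank(A) = m−1, and suppose the digraph of A has a spanning tree rooted at node 1. Let Ã = A − ε E_{11} with ε > 0 (E_{11} the matrix with 1 in entry (1,1) and 0 elsewhere). Then −Ã is a nonsingular M-matrix; in particular there exist positive constants θ_1, …, θ_m with ∑ θ_i = 1 and θ* > 0 such that ∑_{i=1}^m θ_i ã_{ij} < −θ* for every column j. -/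
/-!
The pinned matrix `M = ε E_rr - A` is a Z-matrix with nonnegative row sums, the root's row sum
`ε` is positive, and every node reaches the root along edges `M a b < 0`. This gives a discrete
minimum principle: if `M y ≥ 0` and `y` has a negative minimum, then at a minimizing node the row
sum vanishes and every neighbour is minimizing too, so the minimum spreads along the edges to the
root, which is impossible. Thus `M y ≥ 0 → y ≥ 0`, so `M` is invertible with `M⁻¹ ≥ 0`, and
`θ = 1ᵀ M⁻¹` is positive with `θᵀ M = 1ᵀ`; normalizing `θ` gives the weights.
-/

open Finset Matrix

variable {n 𝕜 : Type*} [Fintype n] [Field 𝕜] [LinearOrder 𝕜] [IsStrictOrderedRing 𝕜]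

theorem Matrix.rowSum_eq_zero_and_eq_at_neg_min {M : Matrix n n 𝕜}
    (hZ : ∀ i j, i ≠ j → M i j ≤ 0) {y : n → 𝕜} {i : n} (hrow : 0 ≤ ∑ j, M i j)
    (hmin : ∀ j, y i ≤ y j) (hneg : y i < 0) (hy : 0 ≤ (M *ᵥ y) i) :
    ∑ j, M i j = 0 ∧ ∀ j, M i j < 0 → y j = y i := by
  have hsplit : (M *ᵥ y) i = (∑ j, M i j) * y i + ∑ j, M i j * (y j - y i) := by
    simp only [mulVec, dotProduct, sum_mul, ← sum_add_distrib]
    exact sum_congr rfl fun j _ => by ring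
  have hterm : ∀ j ∈ univ, M i j * (y j - y i) ≤ 0 := by
    intro j _
    rcases eq_or_ne j i with rfl | hji
    · simp
    · exact mul_nonpos_of_nonpos_of_nonneg (hZ i j hji.symm) (sub_nonneg.2 (hmin j))
  have hsum := sum_nonpos hterm
  have hdiag : (∑ j, M i j) * y i ≤ 0 := mul_nonpos_of_nonneg_of_nonpos hrow hneg.le
  refine ⟨(mul_eq_zero.1 (by linarith : (∑ j, M i j) * y i = 0)).resolve_right hneg.ne,
    fun j hj => ?_⟩
  have hzero := (sum_eq_zero_iff_of_nonpos hterm).1 (by linarith) j (mem_univ j)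
  exact sub_eq_zero.1 ((mul_eq_zero.1 hzero).resolve_left hj.ne)

theorem Matrix.nonneg_of_nonneg_mulVec_of_chained {M : Matrix n n 𝕜}
    (hZ : ∀ i j, i ≠ j → M i j ≤ 0) (hrow : ∀ i, 0 ≤ ∑ j, M i j)
    (hchain : ∀ i, ∃ k, Relation.ReflTransGen (fun a b => M a b < 0) i k ∧ 0 < ∑ j, M k j)
    {y : n → 𝕜} (hy : 0 ≤ M *ᵥ y) : 0 ≤ y := by
  intro i
  by_contra! hi
  obtain ⟨i₀, -, hmin⟩ := univ.exists_min_image y ⟨i, mem_univ i⟩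
  have hneg : y i₀ < 0 := (hmin i (mem_univ i)).trans_lt hi
  have hstep : ∀ k, y k = y i₀ →
      ∑ j, M k j = 0 ∧ ∀ j, M k j < 0 → y j = y k := fun k hk =>
    rowSum_eq_zero_and_eq_at_neg_min hZ (hrow k) (fun j => hk ▸ hmin j (mem_univ j))
      (hk ▸ hneg) (hy k)
  have hreach : ∀ k, Relation.ReflTransGen (fun a b => M a b < 0) i₀ k → y k = y i₀ := by
    intro k hk
    induction hk with
    | refl => rfl
    | tail _ hedge ih => exact ((hstep _ ih).2 _ hedge).trans ih
  obtain ⟨k, hk, hpos⟩ := hchain i₀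
  exact hpos.ne' (hstep k (hreach k hk)).1

section Monotone

variable [DecidableEq n] {M : Matrix n n 𝕜}

theorem Matrix.det_ne_zero_of_monotone (hmono : ∀ y, 0 ≤ M *ᵥ y → 0 ≤ y) : M.det ≠ 0 := by
  intro h
  obtain ⟨v, hv0, hv⟩ := exists_mulVec_eq_zero_iff.2 h
  refine hv0 (le_antisymm ?_ (hmono v hv.ge))
  exact neg_nonneg.1 (hmono (-v) (by rw [mulVec_neg, hv, neg_zero]))

theorem Matrix.mulVec_mulVec_inv_of_monotone (hmono : ∀ y, 0 ≤ M *ᵥ y → 0 ≤ y) (v : n → 𝕜) :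
    M *ᵥ (M⁻¹ *ᵥ v) = v := by
  rw [mulVec_mulVec, mul_nonsing_inv _ (isUnit_iff_ne_zero.2 (det_ne_zero_of_monotone hmono)),
    one_mulVec]

theorem Matrix.exists_pos_vecMul_eq_one_of_monotone (hmono : ∀ y, 0 ≤ M *ᵥ y → 0 ≤ y) :
    ∃ θ : n → 𝕜, (∀ i, 0 < θ i) ∧ θ ᵥ* M = 1 := by
  have hdet := isUnit_iff_ne_zero.2 (det_ne_zero_of_monotone hmono)
  refine ⟨1 ᵥ* M⁻¹, fun i => ?_, by rw [vecMul_vecMul, nonsing_inv_mul _ hdet, vecMul_one]⟩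
  have hcol := mulVec_mulVec_inv_of_monotone hmono (Pi.single i 1)
  rw [mulVec_single_one] at hcol
  have hc : 0 ≤ M⁻¹.col i := hmono _ (hcol ▸ Pi.single_nonneg.2 zero_le_one)
  have hc0 : M⁻¹.col i ≠ 0 := fun h => by simpa [h] using congrFun hcol i
  obtain ⟨k, hk⟩ := (Pi.lt_def.1 (lt_of_le_of_ne hc (Ne.symm hc0))).2
  calc (0 : 𝕜) < ∑ k, M⁻¹.col i k := sum_pos' (fun k _ => hc k) ⟨k, mem_univ k, hk⟩
    _ = (1 ᵥ* M⁻¹) i := by simp [vecMul, dotProduct]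

end Monotone

theorem Matrix.monotone_single_sub_of_reachable [DecidableEq n] {A : Matrix n n 𝕜}
    (hoff : ∀ i j, i ≠ j → 0 ≤ A i j) (hrow : ∀ i, ∑ j, A i j = 0) (r : n)
    (hreach : ∀ i, Relation.ReflTransGen (fun a b => 0 < A a b) i r) {ε : 𝕜} (hε : 0 < ε) :
    ∀ y, 0 ≤ (single r r ε - A) *ᵥ y → 0 ≤ y := by
  have hsum : ∀ i, ∑ j, (single r r ε - A) i j = if i = r then ε else 0 := fun i => by
    simp [sum_sub_distrib, hrow, single_apply, ite_and, eq_comm]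
  have hdiag : ∀ i, A i i ≤ 0 := fun i => by
    have := sum_nonneg fun j (hj : j ∈ univ.erase i) => hoff i j (ne_of_mem_erase hj).symm
    linarith [add_sum_erase univ (A i) (mem_univ i), hrow i]
  have hZ : ∀ i j, i ≠ j → (single r r ε - A) i j = -A i j := fun i j hij => by
    simp [single_apply_of_ne r r ε i j fun h => hij (h.1.symm.trans h.2)]
  refine fun y => nonneg_of_nonneg_mulVec_of_chained
    (fun i j hij => by simpa [hZ i j hij] using hoff i j hij)
    (fun i => by rw [hsum]; split_ifs <;> simp [hε.le])
    (fun i => ⟨r, Relation.ReflTransGen.mono (fun a b hab => ?_) _ _ (hreach i),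
      by rw [hsum, if_pos rfl]; exact hε⟩)
  have hab' : a ≠ b := by rintro rfl; exact (hdiag a).not_gt hab
  simpa [hZ a b hab'] using hab

open Finset in
theorem pinned_matrix_column_dominance_general (m : ℕ)
    (A : Matrix (Fin m) (Fin m) ℝ)
    (hoff : ∀ i j, i ≠ j → 0 ≤ A i j)
    (hdiag : ∀ i, A i i = -∑ j ∈ univ.erase i, A i j)
    (root : Fin m)
    (hspan : ∀ j : Fin m, Relation.ReflTransGen (fun i j => 0 < A j i) root j)
    (ε : ℝ) (hε : 0 < ε) :
    IsUnit (A - Matrix.single root root ε).det ∧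
    ∃ (θ : Fin m → ℝ) (θstar : ℝ), 0 < θstar ∧ (∀ i, 0 < θ i) ∧ (∑ i, θ i) = 1 ∧
      ∀ j, ∑ i, θ i * (A - Matrix.single root root ε) i j < -θstar := by
  have hrow : ∀ i, ∑ j, A i j = 0 := fun i => by
    rw [← add_sum_erase _ _ (mem_univ i), hdiag i, neg_add_cancel]
  have hmono := monotone_single_sub_of_reachable hoff hrow root (fun i => (hspan i).swap) hε
  have hneg : A - single root root ε = -(single root root ε - A) := (neg_sub _ _).symm
  obtain ⟨θ, hθpos, hθM⟩ := exists_pos_vecMul_eq_one_of_monotone hmono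
  set s := ∑ i, θ i
  have hs : 0 < s := sum_pos (fun i _ => hθpos i) ⟨root, mem_univ _⟩
  refine ⟨?_, fun i => θ i / s, 1 / (2 * s), by positivity, fun i => div_pos (hθpos i) hs,
    by rw [← sum_div, div_self hs.ne'], fun j => ?_⟩
  · rw [hneg, det_neg]
    exact ((isUnit_neg_one).pow _).mul (isUnit_iff_ne_zero.2 (det_ne_zero_of_monotone hmono))
  · calc ∑ i, θ i / s * (A - single root root ε) i j
        = -(θ ᵥ* (single root root ε - A)) j / s := by
          simp only [hneg, Matrix.neg_apply, vecMul, dotProduct, sum_div, ← sum_neg_distrib]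
          exact sum_congr rfl fun i _ => by ring
      _ = -(1 / s) := by rw [hθM]; simp [neg_div]
      _ < -(1 / (2 * s)) := by gcongr; linarith

open Finset in
/-- Strict diagonal dominance of the pinned coupling matrix columns:
for a Laplacian-type coupling matrix A of rank m-1 whose digraph has a
spanning tree rooted at node 1 (here node 0), the pinned matrix
Ã = A − ε E₁₁ has −Ã a nonsingular M-matrix; in particular there are
positive weights θ summing to 1 and θ* > 0 with all weighted column sums
of Ã below −θ*. -/
theorem pinned_matrix_column_dominance (m : ℕ) (hm : 0 < m)
    (A : Matrix (Fin m) (Fin m) ℝ)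
    (hoff : ∀ i j, i ≠ j → 0 ≤ A i j)
    (hdiag : ∀ i, A i i = -∑ j ∈ univ.erase i, A i j)
    (hrank : A.rank = m - 1)
    (root : Fin m) (hroot : root = ⟨0, hm⟩)
    (hspan : ∀ j : Fin m, Relation.ReflTransGen (fun i j => 0 < A j i) root j)
    (ε : ℝ) (hε : 0 < ε) :
    IsUnit (A - Matrix.single root root ε).det ∧
    ∃ (θ : Fin m → ℝ) (θstar : ℝ), 0 < θstar ∧ (∀ i, 0 < θ i) ∧ (∑ i, θ i) = 1 ∧
      ∀ j, ∑ i, θ i * (A - Matrix.single root root ε) i j < -θstar :=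
  pinned_matrix_column_dominance_general m A hoff hdiag root hspan ε hε
end

section
/- (Key dissipation estimate for the continuous algorithm) Under the same hypotheses on Ã, θ, θ* as before (∑_i θ_i ã_{ij} < −θ* for all j, ã_{ij} ≥ 0 for i≠j), for any nonzero vectors v_1,…,v_m ∈ ℝ^n and 0 < α < 1, ∑_{i=1}^m θ_i ∑_{k=1}^n sign(v_i^k) · ∑_{j=1}^m ã_{ij} v_j^k / ‖v_j‖_1^α ≤ ∑_{j=1}^m (∑_{i=1}^m θ_i ã_{ij}) ‖v_j‖_1^{1-α} ≤ −θ* ∑_{j=1}^m ‖v_j‖_1^{1-α}. -/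
open Finset

namespace Real

lemma sign_mul_self_eq_abs (x : ℝ) : sign x * x = |x| := by
  rcases lt_trichotomy x 0 with h | rfl | h
  · rw [sign_of_neg h, abs_of_neg h, neg_one_mul]
  · simp
  · rw [sign_of_pos h, abs_of_pos h, one_mul]

lemma abs_sign_le_one (x : ℝ) : |sign x| ≤ 1 := by
  rcases sign_apply_eq x with h | h | h <;> simp [h]

lemma sign_mul_le_abs (x y : ℝ) : sign x * y ≤ |y| :=
  calc sign x * y ≤ |sign x| * |y| := (le_abs_self _).trans (abs_mul _ _).le
    _ ≤ |y| := mul_le_of_le_one_left (abs_nonneg y) (abs_sign_le_one x)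

end Real

section SignPairing

variable {ι κ : Type*} [Fintype κ]

lemma sum_abs_pos_of_ne_zero {u : κ → ℝ} (hu : u ≠ 0) : 0 < ∑ k, |u k| := by
  obtain ⟨k, hk⟩ := Function.ne_iff.mp hu
  exact sum_pos' (fun _ _ => abs_nonneg _) ⟨k, mem_univ k, abs_pos.mpr hk⟩

lemma sum_sign_mul_le_sum_abs (u w : κ → ℝ) : ∑ k, Real.sign (u k) * w k ≤ ∑ k, |w k| :=
  sum_le_sum fun k _ => Real.sign_mul_le_abs (u k) (w k)

lemma mul_sum_sign_mul_le_mul_sum_abs [DecidableEq ι] (A : Matrix ι ι ℝ)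
    (hoff : ∀ i j, i ≠ j → 0 ≤ A i j) (v : ι → κ → ℝ) (i j : ι) :
    A i j * ∑ k, Real.sign (v i k) * v j k ≤ A i j * ∑ k, |v j k| := by
  by_cases hij : i = j
  · subst hij
    simp only [Real.sign_mul_self_eq_abs, le_refl]
  · exact mul_le_mul_of_nonneg_left (sum_sign_mul_le_sum_abs _ _) (hoff i j hij)

lemma sum_mul_sum_sign_mul_sum_div_eq [Fintype ι] (A : Matrix ι ι ℝ) (θ : ι → ℝ) (v : ι → κ → ℝ)
    (N : ι → ℝ) :
    ∑ i, θ i * ∑ k, Real.sign (v i k) * ∑ j, A i j * v j k / N j =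
      ∑ i, ∑ j, θ i * (A i j * ∑ k, Real.sign (v i k) * v j k) / N j := by
  refine sum_congr rfl fun i _ => ?_
  simp only [mul_sum, sum_div]
  rw [sum_comm]
  refine sum_congr rfl fun j _ => sum_congr rfl fun k _ => ?_
  ring

end SignPairing

theorem dissipation_le_sum_colSum_mul_rpow {ι κ : Type*} [Fintype ι] [Fintype κ]
    (A : Matrix ι ι ℝ) (hoff : ∀ i j, i ≠ j → 0 ≤ A i j) (θ : ι → ℝ) (hθ : ∀ i, 0 ≤ θ i)
    (α : ℝ) (v : ι → κ → ℝ) (hv : ∀ j, v j ≠ 0) :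
    ∑ i, θ i * ∑ k, Real.sign (v i k) * ∑ j, A i j * v j k / (∑ l, |v j l|) ^ α ≤
      ∑ j, (∑ i, θ i * A i j) * (∑ l, |v j l|) ^ (1 - α) := by
  classical
  set N : ι → ℝ := fun j => ∑ l, |v j l|
  have hN : ∀ j, 0 < N j := fun j => sum_abs_pos_of_ne_zero (hv j)
  rw [sum_mul_sum_sign_mul_sum_div_eq]
  calc ∑ i, ∑ j, θ i * (A i j * ∑ k, Real.sign (v i k) * v j k) / N j ^ α
      ≤ ∑ i, ∑ j, θ i * (A i j * N j) / N j ^ α :=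
        sum_le_sum fun i _ => sum_le_sum fun j _ =>
          div_le_div_of_nonneg_right
            (mul_le_mul_of_nonneg_left (mul_sum_sign_mul_le_mul_sum_abs A hoff v i j) (hθ i))
            (Real.rpow_nonneg (hN j).le α)
    _ = ∑ j, (∑ i, θ i * A i j) * N j ^ (1 - α) := by
        rw [sum_comm]
        refine sum_congr rfl fun j _ => ?_
        rw [sum_mul, Real.rpow_sub (hN j), Real.rpow_one]
        exact sum_congr rfl fun i _ => by ring

open Finset in
theorem dissipation_continuous_general (m n : ℕ)
    (Atil : Matrix (Fin m) (Fin m) ℝ)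
    (hoff : ∀ i j, i ≠ j → 0 ≤ Atil i j)
    (θ : Fin m → ℝ) (hθ : ∀ i, 0 < θ i)
    (θstar : ℝ)
    (hcol : ∀ j, ∑ i, θ i * Atil i j < -θstar)
    (α : ℝ)
    (v : Fin m → Fin n → ℝ) (hv : ∀ j, v j ≠ 0) :
    (∑ i, θ i * ∑ k, Real.sign (v i k) *
        ∑ j, Atil i j * v j k / (∑ l, |v j l|) ^ α) ≤
      ∑ j, (∑ i, θ i * Atil i j) * (∑ l, |v j l|) ^ (1 - α) ∧
    (∑ j, (∑ i, θ i * Atil i j) * (∑ l, |v j l|) ^ (1 - α)) ≤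
      -θstar * ∑ j, (∑ l, |v j l|) ^ (1 - α) := by
  refine ⟨dissipation_le_sum_colSum_mul_rpow Atil hoff θ (fun i => (hθ i).le) α v hv, ?_⟩
  rw [mul_sum]
  gcongr with j _
  exact (hcol j).le

open Finset in
/-- Key dissipation estimate for the continuous algorithm. -/
theorem dissipation_continuous (m n : ℕ)
    (Atil : Matrix (Fin m) (Fin m) ℝ)
    (hoff : ∀ i j, i ≠ j → 0 ≤ Atil i j)
    (θ : Fin m → ℝ) (hθ : ∀ i, 0 < θ i)
    (θstar : ℝ) (hθstar : 0 < θstar)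
    (hcol : ∀ j, ∑ i, θ i * Atil i j < -θstar)
    (α : ℝ) (hα0 : 0 < α) (hα1 : α < 1)
    (v : Fin m → Fin n → ℝ) (hv : ∀ j, v j ≠ 0) :
    (∑ i, θ i * ∑ k, Real.sign (v i k) *
        ∑ j, Atil i j * v j k / (∑ l, |v j l|) ^ α) ≤
      ∑ j, (∑ i, θ i * Atil i j) * (∑ l, |v j l|) ^ (1 - α) ∧
    (∑ j, (∑ i, θ i * Atil i j) * (∑ l, |v j l|) ^ (1 - α)) ≤
      -θstar * ∑ j, (∑ l, |v j l|) ^ (1 - α) :=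
  dissipation_continuous_general m n Atil hoff θ hθ θstar hcol α v hv
end
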